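/- arXiv:1703.01927 — 2 statements merged into one kernel-verified Lean document; each statement's English description precedes it below -/
import Mathlib

section
/- Let W ∈ ℝ^{m×m} be symmetric. If for every x ∈ ℝ^n the function u ↦ 2(Hx)ᵀu + uᵀ W u is bounded below on ℝ^m, then W ⪰ 0 and W W† H = H. -/
open Matrix

/-- Moore–Penrose conditions: `Wd` is the Moore–Penrose inverse of `W`. -/
def IsMoorePenrose {n m : ℕ} (W : Matrix (Fin n) (Fin m) ℝ)
    (Wd : Matrix (Fin m) (Fin n) ℝ) : Prop :=
  W * Wd * W = W ∧ Wd * W * Wd = Wd ∧ (W * Wd)ᵀ = W * Wd ∧ (Wd * W)ᵀ = Wd * W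

theorem bounded_below_implies_psd_and_range {m n : ℕ}
    (W Wd : Matrix (Fin m) (Fin m) ℝ) (H : Matrix (Fin m) (Fin n) ℝ)
    (hW : W.IsSymm) (hMP : IsMoorePenrose W Wd)
    (hbdd : ∀ x : Fin n → ℝ, ∃ c : ℝ, ∀ u : Fin m → ℝ,
      c ≤ 2 * (H.mulVec x ⬝ᵥ u) + u ⬝ᵥ W.mulVec u) :
    W.PosSemidef ∧ W * Wd * H = H := by
  obtain ⟨h1, _h2, h3, _h4⟩ := hMP
  constructor
  · refine Matrix.posSemidef_iff_dotProduct_mulVec.mpr ⟨by rw [Matrix.IsHermitian, Matrix.conjTranspose_eq_transpose_of_trivial]; exact hW,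
      fun v => ?_⟩
    obtain ⟨c, hc⟩ := hbdd 0
    by_contra hneg
    push_neg at hneg
    simp only [Matrix.mulVec_zero, zero_dotProduct, dotProduct_zero, mul_zero,
      zero_add] at hc
    -- c ≤ (t • v) ⬝ W (t • v) = t^2 (v ⬝ W v) for all t, contradiction
    set b : ℝ := v ⬝ᵥ W.mulVec v with hb
    have hb0 : b < 0 := by
      simpa [star, hb] using hneg
    set t : ℝ := Real.sqrt ((|c| + 1) / (-b)) with ht
    have ht2 : t ^ 2 = (|c| + 1) / (-b) := by
      rw [ht, Real.sq_sqrt]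
      apply div_nonneg
      · positivity
      · linarith
    have := hc (t • v)
    have key : (t • v) ⬝ᵥ W.mulVec (t • v) = t ^ 2 * b := by
      rw [Matrix.mulVec_smul, smul_dotProduct, dotProduct_smul, smul_eq_mul, smul_eq_mul, ← hb]
      ring
    rw [key, ht2] at this
    have hbne : b ≠ 0 := ne_of_lt hb0
    have hcan : (|c| + 1) / (-b) * b = -(|c| + 1) := by
      rw [div_mul_eq_mul_div, mul_div_assoc, div_neg, div_self hbne, mul_neg_one]
    rw [hcan] at this
    linarith [neg_abs_le c]
  · -- range condition
    have hfact : W * (W * Wd) = W := by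
      have hWsym : Wᵀ = W := hW
      calc W * (W * Wd) = Wᵀ * (W * Wd)ᵀ := by rw [hWsym, h3]
        _ = (W * Wd * W)ᵀ := by rw [← transpose_mul]
        _ = Wᵀ := by rw [h1]
        _ = W := hWsym
    have hWW : W * Wd * (W * Wd) = W * Wd := by
      rw [← mul_assoc, h1]
    have key : ∀ x : Fin n → ℝ, (W * Wd * H).mulVec x = H.mulVec x := by
      intro x
      obtain ⟨c, hc⟩ := hbdd x
      set y := H.mulVec x with hy
      set v := y - (W * Wd).mulVec y with hv
      clear_value y
      rw [eq_comm] at hy hv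
      -- (W*Wd) v = 0
      have hproj : (W * Wd).mulVec v = 0 := by
        rw [← hv, Matrix.mulVec_sub, Matrix.mulVec_mulVec, hWW, sub_self]
      -- W v = 0
      have hvW : W.mulVec v = 0 := by
        rw [← hfact, ← Matrix.mulVec_mulVec, hproj, Matrix.mulVec_zero]
      -- y ⬝ v = v ⬝ v
      have hyv : y ⬝ᵥ v = v ⬝ᵥ v := by
        have hproj' : (W * Wd).mulVec y ⬝ᵥ v = 0 := by
          rw [dotProduct_comm, Matrix.dotProduct_mulVec, ← h3, Matrix.vecMul_transpose,
            hproj, zero_dotProduct]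
        have hysplit : y = v + (W * Wd).mulVec y := by
          rw [← hv]; abel
        rw [hysplit, add_dotProduct, hproj', add_zero]
      -- v = 0
      have hv0 : v = 0 := by
        rw [← dotProduct_self_eq_zero (v := v)]
        by_contra hne
        have hnn : (0:ℝ) ≤ v ⬝ᵥ v := by
          simpa using dotProduct_self_star_nonneg (R := ℝ) v
        have hpos : (0:ℝ) < v ⬝ᵥ v := lt_of_le_of_ne hnn (Ne.symm hne)
        set t : ℝ := (|c| + 1) / (2 * (v ⬝ᵥ v)) with htd
        have hle := hc (-(t • v))
        have e1 : y ⬝ᵥ -(t • v) = -(t * (v ⬝ᵥ v)) := by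
          rw [dotProduct_neg, dotProduct_smul, hyv, smul_eq_mul]
        have e2 : -(t • v) ⬝ᵥ W.mulVec (-(t • v)) = 0 := by
          rw [Matrix.mulVec_neg, Matrix.mulVec_smul, hvW]
          simp
        rw [e1, e2, add_zero] at hle
        have ht : 2 * (t * (v ⬝ᵥ v)) = |c| + 1 := by
          rw [htd]
          field_simp
        linarith [neg_abs_le c]
      have h5 : (W * Wd).mulVec y = y := by
        have h6 : y - (W * Wd).mulVec y = 0 := by rw [hv, hv0]
        exact (sub_eq_zero.mp h6).symm
      rw [← Matrix.mulVec_mulVec, hy]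
      exact h5
    ext i j
    have := congrFun (key (Pi.single j 1)) i
    simpa using this
end

section
/- Let P, G, Q, A, B, C, D, R be real matrices of compatible sizes with P = Q + AᵀPA + CᵀPC − HᵀW†H, where W = R + BᵀPB + DᵀPD and H = BᵀPA + DᵀPC, and suppose W ⪰ 0 and W W† H = H. Then for all x ∈ ℝ^n and u ∈ ℝ^m: xᵀQx + uᵀRu + (Ax + Bu)ᵀP(Ax + Bu) + (Cx + Du)ᵀP(Cx + Du) − xᵀPx = (u + W†Hx)ᵀ W (u + W†Hx) ≥ 0. -/
/-
Expanding the quadratic forms in `P` and substituting the Riccati equation for `xᵀPx`, the left-hand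
side becomes `uᵀWu + 2 uᵀHx + (Hx)ᵀW†(Hx)`. Since `W W† H = H`, the vector `z = W†Hx` solves
`Wz = Hx`, and completing the square with `W = Wᵀ` turns this into `(u + z)ᵀW(u + z)`, which is
nonnegative because `W ⪰ 0`.
-/

open Matrix

theorem Matrix.PosSemidef.isSymm {ι R : Type*} [Ring R] [PartialOrder R] [StarRing R] [TrivialStar R]
    {W : Matrix ι ι R} (hW : W.PosSemidef) : W.IsSymm :=
  (conjTranspose_eq_transpose_of_trivial W).symm.trans hW.isHermitian

section

variable {ι ι' κ ν R : Type*} [Fintype ι] [Fintype ι'] [Fintype κ] [Fintype ν] [CommRing R]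

theorem Matrix.dotProduct_transpose_mul_mul_mulVec (M : Matrix ι κ R) (P : Matrix ι ι' R)
    (N : Matrix ι' ν R) (v : κ → R) (w : ν → R) :
    v ⬝ᵥ (Mᵀ * P * N) *ᵥ w = M *ᵥ v ⬝ᵥ P *ᵥ (N *ᵥ w) := by
  rw [Matrix.mul_assoc, ← mulVec_mulVec, dotProduct_mulVec, vecMul_transpose, ← mulVec_mulVec]

theorem Matrix.IsSymm.dotProduct_mulVec_comm {P : Matrix ι ι R} (hP : P.IsSymm) (a b : ι → R) :
    a ⬝ᵥ P *ᵥ b = b ⬝ᵥ P *ᵥ a := by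
  rw [dotProduct_mulVec, ← mulVec_transpose, hP.eq, dotProduct_comm]

theorem Matrix.IsSymm.add_dotProduct_mulVec_add {P : Matrix ι ι R} (hP : P.IsSymm) (a b : ι → R) :
    (a + b) ⬝ᵥ P *ᵥ (a + b) = a ⬝ᵥ P *ᵥ a + 2 * (b ⬝ᵥ P *ᵥ a) + b ⬝ᵥ P *ᵥ b := by
  rw [mulVec_add, dotProduct_add, add_dotProduct, add_dotProduct, hP.dotProduct_mulVec_comm a b]
  ring

theorem Matrix.IsSymm.add_dotProduct_mulVec_add_of_mulVec_eq {W : Matrix ι ι R} (hW : W.IsSymm)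
    {y z : ι → R} (hz : W *ᵥ z = y) (u : ι → R) :
    (u + z) ⬝ᵥ W *ᵥ (u + z) = u ⬝ᵥ W *ᵥ u + 2 * (u ⬝ᵥ y) + z ⬝ᵥ y := by
  rw [hW.add_dotProduct_mulVec_add, hW.dotProduct_mulVec_comm z u, hz]

end

theorem riccati_one_step_completion_general {n m : ℕ}
    (P Q A C : Matrix (Fin n) (Fin n) ℝ) (R : Matrix (Fin m) (Fin m) ℝ)
    (B D : Matrix (Fin n) (Fin m) ℝ)
    (hP : P.IsSymm)
    (W : Matrix (Fin m) (Fin m) ℝ) (hWdef : W = R + Bᵀ * P * B + Dᵀ * P * D)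
    (H : Matrix (Fin m) (Fin n) ℝ) (hHdef : H = Bᵀ * P * A + Dᵀ * P * C)
    (Wd : Matrix (Fin m) (Fin m) ℝ)
    (hRic : P = Q + Aᵀ * P * A + Cᵀ * P * C - Hᵀ * Wd * H)
    (hWpsd : W.PosSemidef) (hWH : W * Wd * H = H) :
    ∀ (x : Fin n → ℝ) (u : Fin m → ℝ),
      x ⬝ᵥ Q.mulVec x + u ⬝ᵥ R.mulVec u
        + (A.mulVec x + B.mulVec u) ⬝ᵥ P.mulVec (A.mulVec x + B.mulVec u)
        + (C.mulVec x + D.mulVec u) ⬝ᵥ P.mulVec (C.mulVec x + D.mulVec u)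
        - x ⬝ᵥ P.mulVec x
        = (u + Wd.mulVec (H.mulVec x)) ⬝ᵥ W.mulVec (u + Wd.mulVec (H.mulVec x))
      ∧ 0 ≤ (u + Wd.mulVec (H.mulVec x)) ⬝ᵥ W.mulVec (u + Wd.mulVec (H.mulVec x)) := by
  intro x u
  refine ⟨?_, hWpsd.dotProduct_mulVec_nonneg _⟩
  have hz : W *ᵥ (Wd *ᵥ (H *ᵥ x)) = H *ᵥ x := by rw [mulVec_mulVec, mulVec_mulVec, hWH]
  have hPx : x ⬝ᵥ P *ᵥ x = x ⬝ᵥ Q *ᵥ x + A *ᵥ x ⬝ᵥ P *ᵥ (A *ᵥ x) + C *ᵥ x ⬝ᵥ P *ᵥ (C *ᵥ x)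
      - H *ᵥ x ⬝ᵥ Wd *ᵥ (H *ᵥ x) := by
    conv_lhs => rw [hRic]
    simp only [sub_mulVec, add_mulVec, dotProduct_sub, dotProduct_add,
      dotProduct_transpose_mul_mul_mulVec]
  have huWu : u ⬝ᵥ W *ᵥ u = u ⬝ᵥ R *ᵥ u + B *ᵥ u ⬝ᵥ P *ᵥ (B *ᵥ u) + D *ᵥ u ⬝ᵥ P *ᵥ (D *ᵥ u) := by
    simp only [hWdef, add_mulVec, dotProduct_add, dotProduct_transpose_mul_mul_mulVec]
  have huHx : u ⬝ᵥ H *ᵥ x = B *ᵥ u ⬝ᵥ P *ᵥ (A *ᵥ x) + D *ᵥ u ⬝ᵥ P *ᵥ (C *ᵥ x) := by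
    simp only [hHdef, add_mulVec, dotProduct_add, dotProduct_transpose_mul_mul_mulVec]
  rw [hWpsd.isSymm.add_dotProduct_mulVec_add_of_mulVec_eq hz, hP.add_dotProduct_mulVec_add,
    hP.add_dotProduct_mulVec_add, hPx, huWu, huHx, dotProduct_comm (Wd *ᵥ _)]
  ring

theorem riccati_one_step_completion {n m : ℕ}
    (P Q A C : Matrix (Fin n) (Fin n) ℝ) (R : Matrix (Fin m) (Fin m) ℝ)
    (B D : Matrix (Fin n) (Fin m) ℝ)
    (hQ : Q.IsSymm) (hP : P.IsSymm) (hR : R.IsSymm)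
    (W : Matrix (Fin m) (Fin m) ℝ) (hWdef : W = R + Bᵀ * P * B + Dᵀ * P * D)
    (H : Matrix (Fin m) (Fin n) ℝ) (hHdef : H = Bᵀ * P * A + Dᵀ * P * C)
    (Wd : Matrix (Fin m) (Fin m) ℝ) (hMP : IsMoorePenrose W Wd)
    (hRic : P = Q + Aᵀ * P * A + Cᵀ * P * C - Hᵀ * Wd * H)
    (hWpsd : W.PosSemidef) (hWH : W * Wd * H = H) :
    ∀ (x : Fin n → ℝ) (u : Fin m → ℝ),
      x ⬝ᵥ Q.mulVec x + u ⬝ᵥ R.mulVec u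
        + (A.mulVec x + B.mulVec u) ⬝ᵥ P.mulVec (A.mulVec x + B.mulVec u)
        + (C.mulVec x + D.mulVec u) ⬝ᵥ P.mulVec (C.mulVec x + D.mulVec u)
        - x ⬝ᵥ P.mulVec x
        = (u + Wd.mulVec (H.mulVec x)) ⬝ᵥ W.mulVec (u + Wd.mulVec (H.mulVec x))
      ∧ 0 ≤ (u + Wd.mulVec (H.mulVec x)) ⬝ᵥ W.mulVec (u + Wd.mulVec (H.mulVec x)) :=
  riccati_one_step_completion_general P Q A C R B D hP W hWdef H hHdef Wd hRic hWpsd hWH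
end
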